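/- arXiv:1107.3613 — 6 statements merged into one kernel-verified Lean document; each statement's English description precedes it below -/
import Mathlib

section
/- Let ℓ > 2 be an integer and let λ be a partition that is not an (ℓ,0)-JM partition, i.e. there exist boxes (a,b), (a,y), (x,b) in the Young diagram of λ with ℓ ∣ h_{(a,b)}^λ, ℓ ∤ h_{(a,y)}^λ and ℓ ∤ h_{(x,b)}^λ. Then there exist boxes (c,d), (c,w), (z,d) in the Young diagram of λ with c < z and d < w such that ℓ ∣ h_{(c,d)}^λ, ℓ ∤ h_{(c,w)}^λ and ℓ ∤ h_{(z,d)}^λ. -/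
/-- Hook length of the box in row `a`, column `b` (0-indexed) of a Young diagram:
the number of boxes `(a, b')` with `b' ≥ b` plus the number of boxes `(a', b)` with `a' > a`. -/
def YoungDiagram.hook (μ : YoungDiagram) (a b : ℕ) : ℕ :=
  (μ.rowLen a - b) + (μ.colLen b - (a + 1))

/-- `μ` is an `(ℓ,0)`-JM partition: there do not exist boxes `(a,b)`, `(a,y)`, `(x,b)` of `μ`
with `ℓ ∣ h_{(a,b)}`, `ℓ ∤ h_{(a,y)}` and `ℓ ∤ h_{(x,b)}`. -/
def IsJM (ℓ : ℕ) (μ : YoungDiagram) : Prop :=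
  ¬ ∃ a b y x : ℕ, (a, b) ∈ μ ∧ (a, y) ∈ μ ∧ (x, b) ∈ μ ∧
      ℓ ∣ μ.hook a b ∧ ¬ ℓ ∣ μ.hook a y ∧ ¬ ℓ ∣ μ.hook x b

/-! If row `a` has a hook not divisible by `ℓ` to the right of `(a, b)` and column `b` one below
it, these complete the triple. Otherwise, up to transposition, all hooks of row `a` from column `b`
on are divisible by `ℓ`, so `y < b` and the last box of row `a` has hook at least `ℓ`. This forces
the `ℓ` rows starting at row `a` to have the same length, so going down `t < ℓ` of them lowers
every hook by exactly `t`. Going down `s = h_{(a,y)} mod ℓ` rows makes the hook in column `y`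
divisible by `ℓ` but not the one in column `b`, and one row further the hook in column `y` is
`-1 mod ℓ`, unless `s = ℓ - 1`. In that case either a lower box of column `y` completes a triple,
or the same rectangle argument applied to column `y` shows that columns `y` and `y + 1` have the
same length, and column `y + 1`, with residue `ℓ - 2 ≠ 0`, works instead. -/

theorem Nat.not_dvd_of_dvd_add {ℓ m r : ℕ} (h : ℓ ∣ m + r) (hr : 0 < r) (hrℓ : r < ℓ) :
    ¬ ℓ ∣ m :=
  fun hm => Nat.not_dvd_of_pos_of_lt hr hrℓ ((Nat.dvd_add_right hm).mp h)

namespace YoungDiagram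

def HasOrderedNonJMTriple (ℓ : ℕ) (μ : YoungDiagram) : Prop :=
  ∃ c d w z : ℕ, c < z ∧ d < w ∧ (c, d) ∈ μ ∧ (c, w) ∈ μ ∧ (z, d) ∈ μ ∧
    ℓ ∣ μ.hook c d ∧ ¬ ℓ ∣ μ.hook c w ∧ ¬ ℓ ∣ μ.hook z d

variable {ℓ : ℕ} {μ : YoungDiagram} {a b c d s t x y : ℕ}

theorem hook_pos (h : (a, b) ∈ μ) : 0 < μ.hook a b := by
  have := mem_iff_lt_rowLen.mp h
  unfold hook
  omega

theorem hook_transpose (h : (a, b) ∈ μ) : μ.transpose.hook b a = μ.hook a b := by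
  have := mem_iff_lt_rowLen.mp h
  have := mem_iff_lt_colLen.mp h
  simp only [hook, rowLen_transpose, colLen_transpose]
  omega

theorem hook_add_eq_of_rowLen_eq (hrow : μ.rowLen (a + t) = μ.rowLen a) (hb : b < μ.rowLen a) :
    μ.hook (a + t) b + t = μ.hook a b := by
  have : a + t < μ.colLen b := mem_iff_lt_colLen.mp (mem_iff_lt_rowLen.mpr (hrow ▸ hb))
  unfold hook
  omega

theorem rowLen_add_eq_of_forall_dvd (hab : (a, b) ∈ μ)
    (hall : ∀ j, b ≤ j → (a, j) ∈ μ → ℓ ∣ μ.hook a j) (ht : t < ℓ) :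
    μ.rowLen (a + t) = μ.rowLen a := by
  have hb := mem_iff_lt_rowLen.mp hab
  have hlast : (a, μ.rowLen a - 1) ∈ μ := mem_iff_lt_rowLen.mpr (by omega)
  have hℓ : ℓ ≤ μ.hook a (μ.rowLen a - 1) :=
    Nat.le_of_dvd (hook_pos hlast) (hall _ (by omega) hlast)
  have hmem : (a + t, μ.rowLen a - 1) ∈ μ := by
    have := mem_iff_lt_colLen.mp hlast
    unfold hook at hℓ
    exact mem_iff_lt_colLen.mpr (by omega)
  have := mem_iff_lt_rowLen.mp hmem
  have := μ.rowLen_anti a (a + t) (Nat.le_add_right a t)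
  omega

theorem colLen_add_eq_of_forall_dvd (hab : (a, b) ∈ μ)
    (hall : ∀ i, a ≤ i → (i, b) ∈ μ → ℓ ∣ μ.hook i b) (ht : t < ℓ) :
    μ.colLen (b + t) = μ.colLen b := by
  have hall' : ∀ i, a ≤ i → (b, i) ∈ μ.transpose → ℓ ∣ μ.transpose.hook b i := by
    intro i hi hbi
    rw [mem_transpose] at hbi
    rw [hook_transpose hbi]
    exact hall i hi hbi
  simpa only [rowLen_transpose] using
    rowLen_add_eq_of_forall_dvd (mem_transpose.mpr hab) hall' ht

theorem hook_succ_add_one_of_forall_dvd (hℓ : 1 < ℓ) (hcy : (c, y) ∈ μ)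
    (hall : ∀ i, c ≤ i → (i, y) ∈ μ → ℓ ∣ μ.hook i y) (hay : (a, y) ∈ μ) :
    μ.hook a (y + 1) + 1 = μ.hook a y := by
  have hcol : μ.colLen (y + 1) = μ.colLen y := colLen_add_eq_of_forall_dvd hcy hall hℓ
  have := mem_iff_lt_rowLen.mp hay
  have := mem_iff_lt_colLen.mp hay
  unfold hook
  omega

theorem HasOrderedNonJMTriple.of_transpose (h : HasOrderedNonJMTriple ℓ μ.transpose) :
    HasOrderedNonJMTriple ℓ μ := by
  obtain ⟨c, d, w, z, hcz, hdw, hcd, hcw, hzd, hdvd, hnw, hnz⟩ := h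
  rw [mem_transpose] at hcd hcw hzd
  rw [hook_transpose hcd] at hdvd
  rw [hook_transpose hcw] at hnw
  rw [hook_transpose hzd] at hnz
  exact ⟨d, c, z, w, hdw, hcz, hcd, hzd, hcw, hdvd, hnz, hnw⟩

theorem hasOrderedNonJMTriple_of_rowLen_eq (hrow : ∀ t < ℓ, μ.rowLen (a + t) = μ.rowLen a)
    (hdb : d < b) (hb : b < μ.rowLen a) (hdiv : ℓ ∣ μ.hook a b) (hs : ℓ ∣ μ.hook a d - s)
    (hs0 : 0 < s) (hsℓ : s + 1 < ℓ) : HasOrderedNonJMTriple ℓ μ := by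
  have hmem : ∀ t < ℓ, ∀ j < μ.rowLen a, (a + t, j) ∈ μ := fun t ht j hj =>
    mem_iff_lt_rowLen.mpr (by rw [hrow t ht]; exact hj)
  have hsd := hook_add_eq_of_rowLen_eq (hrow s (by omega)) (hdb.trans hb)
  have hsb := hook_add_eq_of_rowLen_eq (hrow s (by omega)) hb
  have hsd' := hook_add_eq_of_rowLen_eq (hrow (s + 1) hsℓ) (hdb.trans hb)
  have hdvd : ℓ ∣ μ.hook (a + s) d := by rwa [← hsd, Nat.add_sub_cancel] at hs
  refine ⟨a + s, d, b, a + s + 1, by omega, hdb, hmem s (by omega) d (by omega),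
    hmem s (by omega) b hb, hmem (s + 1) hsℓ d (by omega), hdvd, ?_, ?_⟩
  · exact Nat.not_dvd_of_dvd_add (hsb ▸ hdiv) hs0 (by omega)
  · have : μ.hook (a + (s + 1)) d + 1 = μ.hook (a + s) d := by omega
    exact Nat.not_dvd_of_dvd_add (this ▸ hdvd) one_pos (by omega)

theorem hasOrderedNonJMTriple_of_row (hℓ : 2 < ℓ) (hab : (a, b) ∈ μ)
    (hall : ∀ j, b ≤ j → (a, j) ∈ μ → ℓ ∣ μ.hook a j) (hay : (a, y) ∈ μ)
    (hny : ¬ ℓ ∣ μ.hook a y) : HasOrderedNonJMTriple ℓ μ := by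
  have hb := mem_iff_lt_rowLen.mp hab
  have hy := mem_iff_lt_rowLen.mp hay
  have hyb : y < b := by
    by_contra! h
    exact hny (hall y h hay)
  have hrow : ∀ t < ℓ, μ.rowLen (a + t) = μ.rowLen a := fun t ht =>
    rowLen_add_eq_of_forall_dvd hab hall ht
  have hdiv := hall b le_rfl hab
  have hres := Nat.dvd_sub_mod (n := ℓ) (μ.hook a y)
  have hres0 : 0 < μ.hook a y % ℓ := Nat.pos_of_ne_zero (mt Nat.dvd_of_mod_eq_zero hny)
  have hresℓ : μ.hook a y % ℓ < ℓ := Nat.mod_lt _ (by omega)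
  rcases Nat.lt_or_ge (μ.hook a y % ℓ + 1) ℓ with hlt | hge
  · exact hasOrderedNonJMTriple_of_rowLen_eq hrow hyb hb hdiv hres hres0 hlt
  have hcy := hook_add_eq_of_rowLen_eq (hrow (ℓ - 1) (by omega)) hy
  have hcb := hook_add_eq_of_rowLen_eq (hrow (ℓ - 1) (by omega)) hb
  have hcmem : (a + (ℓ - 1), y) ∈ μ := mem_iff_lt_rowLen.mpr (by rw [hrow _ (by omega)]; exact hy)
  have hdvd : ℓ ∣ μ.hook (a + (ℓ - 1)) y := by
    rwa [show μ.hook a y - μ.hook a y % ℓ = μ.hook (a + (ℓ - 1)) y by omega] at hres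
  by_cases hz : ∃ z, a + (ℓ - 1) < z ∧ (z, y) ∈ μ ∧ ¬ ℓ ∣ μ.hook z y
  · obtain ⟨z, hcz, hzy, hnz⟩ := hz
    refine ⟨a + (ℓ - 1), y, b, z, hcz, hyb, hcmem,
      mem_iff_lt_rowLen.mpr (by rw [hrow _ (by omega)]; exact hb), hzy, hdvd, ?_, hnz⟩
    exact Nat.not_dvd_of_dvd_add (hcb ▸ hdiv) (by omega) (by omega)
  push Not at hz
  have hy1 : μ.hook a (y + 1) + 1 = μ.hook a y := by
    refine hook_succ_add_one_of_forall_dvd (ℓ := ℓ) (by omega) hcmem (fun i hi hiy => ?_) hay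
    rcases hi.eq_or_lt with rfl | hlt
    exacts [hdvd, hz i hlt hiy]
  have hres' : ℓ ∣ μ.hook a (y + 1) - (ℓ - 2) := by
    rwa [show μ.hook a y - μ.hook a y % ℓ = μ.hook a (y + 1) - (ℓ - 2) by omega] at hres
  have hy1b : y + 1 < b := by
    by_contra! h
    obtain rfl : b = y + 1 := by omega
    refine Nat.not_dvd_of_dvd_add (r := ℓ - 2) ?_ (by omega) (by omega) hres'
    rwa [Nat.sub_add_cancel (by omega)]
  exact hasOrderedNonJMTriple_of_rowLen_eq hrow hy1b hb hdiv hres' (by omega) (by omega)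

theorem hasOrderedNonJMTriple_of_col (hℓ : 2 < ℓ) (hab : (a, b) ∈ μ)
    (hall : ∀ i, a ≤ i → (i, b) ∈ μ → ℓ ∣ μ.hook i b) (hxb : (x, b) ∈ μ)
    (hnx : ¬ ℓ ∣ μ.hook x b) : HasOrderedNonJMTriple ℓ μ := by
  refine HasOrderedNonJMTriple.of_transpose (hasOrderedNonJMTriple_of_row hℓ
    (mem_transpose.mpr hab) (fun i hi hbi => ?_) (mem_transpose.mpr hxb) ?_)
  · rw [mem_transpose] at hbi
    rw [hook_transpose hbi]
    exact hall i hi hbi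
  · rwa [hook_transpose hxb]

end YoungDiagram

open YoungDiagram in
/-- If `λ` is not an `(ℓ,0)`-JM partition, then there are witnessing boxes `(c,d)`, `(c,w)`,
`(z,d)` with `c < z` and `d < w`. -/
theorem rearrange (ℓ : ℕ) (hℓ : 2 < ℓ) (lam : YoungDiagram) (h : ¬ IsJM ℓ lam) :
    ∃ c d w z : ℕ, c < z ∧ d < w ∧ (c, d) ∈ lam ∧ (c, w) ∈ lam ∧ (z, d) ∈ lam ∧
      ℓ ∣ lam.hook c d ∧ ¬ ℓ ∣ lam.hook c w ∧ ¬ ℓ ∣ lam.hook z d := by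
  obtain ⟨a, b, y, x, hab, hay, hxb, hdiv, hny, hnx⟩ := not_not.mp h
  by_cases hrow : ∀ j, b ≤ j → (a, j) ∈ lam → ℓ ∣ lam.hook a j
  · exact hasOrderedNonJMTriple_of_row hℓ hab hrow hay hny
  by_cases hcol : ∀ i, a ≤ i → (i, b) ∈ lam → ℓ ∣ lam.hook i b
  · exact hasOrderedNonJMTriple_of_col hℓ hab hcol hxb hnx
  push Not at hrow hcol
  obtain ⟨w, hbw, haw, hnw⟩ := hrow
  obtain ⟨z, haz, hzb, hnz⟩ := hcol
  refine ⟨a, b, w, z, haz.lt_of_ne ?_, hbw.lt_of_ne ?_, hab, haw, hzb, hdiv, hnw, hnz⟩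
  · rintro rfl
    exact hnz hdiv
  · rintro rfl
    exact hnw hdiv
end

section
/- Let ℓ > 2 be an integer, let λ and μ be partitions (Young diagrams) with λ ⊆ μ such that the set μ∖λ consists of exactly ℓ boxes, all lying in a single row (so μ is obtained from λ by adding a horizontal ℓ-rim hook). If λ is not an (ℓ,0)-JM partition, then μ is not an (ℓ,0)-JM partition. -/
/-!
Let `q` be the length of row `r` of `λ`, so that `μ` adds the cells `(r, q), …, (r, q + ℓ - 1)`.
From `λ` to `μ`, the hooks in row `r` left of column `q` grow by `ℓ`, the hooks above the new
cells grow by `1`, and all other hooks of `λ` are unchanged; so divisibility by `ℓ` can only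
change for the cells `(i, c)` with `i < r` and `q ≤ c < q + ℓ`.

If some `h^μ_{(x, q)}` with `x < r` is prime to `ℓ`, the new cells `(r, q)` and `(r, q + 1)`, of
hook lengths `ℓ` and `ℓ - 1`, together with `(x, q)` show that `μ` is not JM. Otherwise
`h^μ_{(i, q)} ≡ 0` for every `i < r`, hence `h^λ_{(i, c)} ≡ q - c - 1` in the window; this forces
the column `b` of a witness `(a, b), (a, y), (x, b)` for `λ` out of the window, and the witness
survives in `μ`, with `y` replaced by `q + 1` if `y` lies in the window.
-/

namespace YoungDiagram

theorem rowLen_le_rowLen {lam mu : YoungDiagram} (hle : lam ≤ mu) (i : ℕ) :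
    lam.rowLen i ≤ mu.rowLen i :=
  le_of_forall_lt fun _ hj => mem_iff_lt_rowLen.1 (hle (mem_iff_lt_rowLen.2 hj))

theorem colLen_eq_of_forall_lt_rowLen_iff (μ : YoungDiagram) {c n : ℕ}
    (h : ∀ i, c < μ.rowLen i ↔ i < n) : μ.colLen c = n :=
  eq_of_forall_lt_iff fun i => by rw [← mem_iff_lt_colLen, mem_iff_lt_rowLen, h]

theorem lt_of_mem_of_rowLen_le {μ : YoungDiagram} {i c r : ℕ} (hic : (i, c) ∈ μ)
    (hc : μ.rowLen r ≤ c) : i < r :=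
  lt_of_not_ge fun hri => by
    have := μ.rowLen_anti _ _ hri
    have := mem_iff_lt_rowLen.1 hic
    omega

theorem hook_add_eq_hook_add {μ : YoungDiagram} {i c c' : ℕ} (hcol : μ.colLen c = μ.colLen c')
    (hc : c ≤ μ.rowLen i) (hc' : c' ≤ μ.rowLen i) : μ.hook i c + c = μ.hook i c' + c' := by
  unfold hook
  omega

section CellsInOneRow

variable {lam mu : YoungDiagram} {r : ℕ} (hle : lam ≤ mu)
  (hrow : ∀ p ∈ mu.cells \ lam.cells, p.1 = r)
include hle hrow

theorem rowLen_eq_of_sdiff_subset_row {i : ℕ} (hi : i ≠ r) : mu.rowLen i = lam.rowLen i := by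
  refine le_antisymm (le_of_forall_lt fun j hj => ?_) (rowLen_le_rowLen hle i)
  by_contra hlam
  exact hi (hrow (i, j) (by simp [mem_iff_lt_rowLen, hj, hlam]))

theorem card_sdiff_of_sdiff_subset_row :
    (mu.cells \ lam.cells).card = mu.rowLen r - lam.rowLen r := by
  have hsdiff : mu.cells \ lam.cells = mu.row r \ lam.row r := by
    ext p
    simp only [Finset.mem_sdiff, mem_row_iff, mem_cells]
    exact ⟨fun hp => ⟨⟨hp.1, hrow p (by simpa using hp)⟩, fun hp' => hp.2 hp'.1⟩,
      fun hp => ⟨hp.1.1, fun hp' => hp.2 ⟨hp', hp.1.2⟩⟩⟩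
  have hrows : lam.row r ⊆ mu.row r := Finset.filter_subset_filter _ hle
  rw [hsdiff, Finset.card_sdiff_of_subset hrows, ← rowLen_eq_card, ← rowLen_eq_card]

end CellsInOneRow

structure IsRowExtension (lam mu : YoungDiagram) (r ℓ : ℕ) : Prop where
  rowLen_self : mu.rowLen r = lam.rowLen r + ℓ
  rowLen_of_ne : ∀ {i}, i ≠ r → mu.rowLen i = lam.rowLen i

namespace IsRowExtension

variable {lam mu : YoungDiagram} {r ℓ i c : ℕ}

theorem of_cells (hle : lam ≤ mu) (hcard : (mu.cells \ lam.cells).card = ℓ)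
    (hrow : ∀ p ∈ mu.cells \ lam.cells, p.1 = r) : IsRowExtension lam mu r ℓ where
  rowLen_self := by
    have := card_sdiff_of_sdiff_subset_row hle hrow
    have := rowLen_le_rowLen hle r
    omega
  rowLen_of_ne := rowLen_eq_of_sdiff_subset_row hle hrow

variable (h : IsRowExtension lam mu r ℓ)
include h

theorem rowLen_le (i : ℕ) : lam.rowLen i ≤ mu.rowLen i := by
  rcases eq_or_ne i r with rfl | hi
  · simp [h.rowLen_self]
  · rw [h.rowLen_of_ne hi]

theorem le : lam ≤ mu := fun _ hp =>
  mem_iff_lt_rowLen.2 ((mem_iff_lt_rowLen.1 hp).trans_le (h.rowLen_le _))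

theorem add_le_rowLen_of_lt (hi : i < r) : lam.rowLen r + ℓ ≤ lam.rowLen i := by
  rw [← h.rowLen_self, ← h.rowLen_of_ne hi.ne]
  exact mu.rowLen_anti _ _ hi.le

theorem mem_of_lt (hi : i < r) (hc : c < lam.rowLen r + ℓ) : (i, c) ∈ lam :=
  mem_iff_lt_rowLen.2 (hc.trans_le (h.add_le_rowLen_of_lt hi))

theorem colLen_left_eq (hc₁ : lam.rowLen r ≤ c) (hc₂ : c < lam.rowLen r + ℓ) :
    lam.colLen c = r :=
  lam.colLen_eq_of_forall_lt_rowLen_iff fun _ =>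
    ⟨fun hci => lt_of_mem_of_rowLen_le (mem_iff_lt_rowLen.2 hci) hc₁,
      fun hi => hc₂.trans_le (h.add_le_rowLen_of_lt hi)⟩

theorem colLen_right_eq (hc₁ : lam.rowLen r ≤ c) (hc₂ : c < lam.rowLen r + ℓ) :
    mu.colLen c = r + 1 :=
  mu.colLen_eq_of_forall_lt_rowLen_iff fun i => by
    rcases lt_trichotomy i r with hi | rfl | hi
    · have := h.add_le_rowLen_of_lt hi
      rw [h.rowLen_of_ne hi.ne]
      omega
    · rw [h.rowLen_self]
      omega
    · have := lam.rowLen_anti _ _ hi.le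
      rw [h.rowLen_of_ne hi.ne']
      omega

theorem colLen_eq_of_not_mem (hc : c < lam.rowLen r ∨ lam.rowLen r + ℓ ≤ c) :
    mu.colLen c = lam.colLen c :=
  mu.colLen_eq_of_forall_lt_rowLen_iff fun i => by
    rw [← mem_iff_lt_colLen, mem_iff_lt_rowLen]
    rcases eq_or_ne i r with rfl | hi
    · rw [h.rowLen_self]
      omega
    · rw [h.rowLen_of_ne hi]

theorem hook_of_lt (hi : i < r) (hc₁ : lam.rowLen r ≤ c) (hc₂ : c < lam.rowLen r + ℓ) :
    mu.hook i c = lam.hook i c + 1 := by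
  have := h.add_le_rowLen_of_lt hi
  unfold hook
  rw [h.rowLen_of_ne hi.ne, h.colLen_right_eq hc₁ hc₂, h.colLen_left_eq hc₁ hc₂]
  omega

theorem hook_self_of_lt (hc : c < lam.rowLen r) : mu.hook r c = lam.hook r c + ℓ := by
  unfold hook
  rw [h.rowLen_self, h.colLen_eq_of_not_mem (.inl hc)]
  omega

theorem hook_of_ne (hi : i ≠ r) (hc : c < lam.rowLen r ∨ lam.rowLen r + ℓ ≤ c) :
    mu.hook i c = lam.hook i c := by
  unfold hook
  rw [h.rowLen_of_ne hi, h.colLen_eq_of_not_mem hc]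

theorem hook_self_add (hc₁ : lam.rowLen r ≤ c) (hc₂ : c < lam.rowLen r + ℓ) :
    mu.hook r c + c = lam.rowLen r + ℓ := by
  unfold hook
  rw [h.rowLen_self, h.colLen_right_eq hc₁ hc₂]
  omega

theorem hook_left_add (hi : i < r) (hc₁ : lam.rowLen r ≤ c) (hc₂ : c < lam.rowLen r + ℓ) :
    lam.hook i c + c = lam.hook i (lam.rowLen r) + lam.rowLen r := by
  have := h.add_le_rowLen_of_lt hi
  exact hook_add_eq_hook_add
    (by rw [h.colLen_left_eq hc₁ hc₂, h.colLen_left_eq le_rfl (by omega)]) (by omega) (by omega)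

theorem dvd_hook_iff (hic : (i, c) ∈ lam) (hc : c < lam.rowLen r ∨ lam.rowLen r + ℓ ≤ c) :
    ℓ ∣ mu.hook i c ↔ ℓ ∣ lam.hook i c := by
  rcases eq_or_ne i r with rfl | hi
  · rw [h.hook_self_of_lt (mem_iff_lt_rowLen.1 hic), Nat.dvd_add_self_right]
  · rw [h.hook_of_ne hi hc]

theorem not_isJM_of_not_dvd_hook (hℓ : 2 < ℓ) {x : ℕ} (hx : x < r)
    (hnd : ¬ ℓ ∣ mu.hook x (lam.rowLen r)) : ¬ IsJM ℓ mu := by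
  set q := lam.rowLen r
  have hq := h.hook_self_add (c := q) le_rfl (by omega)
  have hq₁ := h.hook_self_add (c := q + 1) (by omega) (by omega)
  have hrow : q + 1 < mu.rowLen r := by rw [h.rowLen_self]; omega
  exact fun hJM => hJM ⟨r, q, q + 1, x, mem_iff_lt_rowLen.2 (by omega), mem_iff_lt_rowLen.2 hrow,
    h.le (h.mem_of_lt hx (by omega)), ⟨1, by omega⟩,
    Nat.not_dvd_of_pos_of_lt (by omega) (by omega), hnd⟩

theorem lt_or_add_le_of_forall_dvd_hook (hdvd : ∀ i < r, ℓ ∣ mu.hook i (lam.rowLen r))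
    {a b x : ℕ} (hab : (a, b) ∈ lam) (hxb : (x, b) ∈ lam) (ha : ℓ ∣ lam.hook a b)
    (hx : ¬ ℓ ∣ lam.hook x b) : b < lam.rowLen r ∨ lam.rowLen r + ℓ ≤ b := by
  by_contra! hb
  obtain ⟨hb₁, hb₂⟩ := hb
  have hshift : ∀ i < r, ℓ ∣ lam.hook i b + (b - lam.rowLen r + 1) := fun i hi => by
    have := h.hook_of_lt hi le_rfl (by omega)
    have := h.hook_left_add hi hb₁ hb₂
    convert hdvd i hi using 1
    omega
  have hb : ℓ ∣ b - lam.rowLen r + 1 :=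
    (Nat.dvd_add_right ha).1 (hshift a (lt_of_mem_of_rowLen_le hab hb₁))
  have := Nat.le_of_dvd (by omega) hb
  have hxb := hshift x (lt_of_mem_of_rowLen_le hxb hb₁)
  rw [show b - lam.rowLen r + 1 = ℓ by omega, Nat.dvd_add_self_right] at hxb
  exact hx hxb

theorem not_isJM_of_forall_dvd_hook (hℓ : 1 < ℓ) (hdvd : ∀ i < r, ℓ ∣ mu.hook i (lam.rowLen r))
    (hlam : ¬ IsJM ℓ lam) : ¬ IsJM ℓ mu := by
  obtain ⟨a, b, y, x, hab, hay, hxb, ha, hy, hx⟩ := not_not.1 hlam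
  have hb := h.lt_or_add_le_of_forall_dvd_hook hdvd hab hxb ha hx
  have ha' : ℓ ∣ mu.hook a b := (h.dvd_hook_iff hab hb).2 ha
  have hx' : ¬ ℓ ∣ mu.hook x b := by rwa [h.dvd_hook_iff hxb hb]
  by_cases hyq : y < lam.rowLen r ∨ lam.rowLen r + ℓ ≤ y
  · exact fun hJM => hJM
      ⟨a, b, y, x, h.le hab, h.le hay, h.le hxb, ha', by rwa [h.dvd_hook_iff hay hyq], hx'⟩
  push Not at hyq
  have har := lt_of_mem_of_rowLen_le hay hyq.1
  have hnext : mu.hook a (lam.rowLen r + 1) + 1 = mu.hook a (lam.rowLen r) := by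
    have := h.hook_of_lt har (c := lam.rowLen r + 1) (by omega) (by omega)
    have := h.hook_of_lt har (c := lam.rowLen r) le_rfl (by omega)
    have := h.hook_left_add har (c := lam.rowLen r + 1) (by omega) (by omega)
    omega
  refine fun hJM => hJM ⟨a, b, lam.rowLen r + 1, x, h.le hab,
    h.le (h.mem_of_lt har (by omega)), h.le hxb, ha', fun hd => ?_, hx'⟩
  have := Nat.dvd_one.1 ((Nat.dvd_add_right hd).1 (hnext ▸ hdvd a har))
  omega

end IsRowExtension

end YoungDiagram

/-- Adding a horizontal `ℓ`-rim hook (ℓ boxes in a single row) to a partition that is not an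
`(ℓ,0)`-JM partition yields a partition that is not an `(ℓ,0)`-JM partition. -/
theorem add_horizontal_rim_hook_not_JM (ℓ : ℕ) (hℓ : 2 < ℓ) (lam mu : YoungDiagram)
    (hsub : lam.cells ⊆ mu.cells)
    (hcard : (mu.cells \ lam.cells).card = ℓ)
    (hrow : ∃ r : ℕ, ∀ c ∈ mu.cells \ lam.cells, c.1 = r)
    (h : ¬ IsJM ℓ lam) : ¬ IsJM ℓ mu := by
  obtain ⟨r, hrow⟩ := hrow
  have hext : YoungDiagram.IsRowExtension lam mu r ℓ :=
    .of_cells (YoungDiagram.cells_subset_iff.1 hsub) hcard hrow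
  by_cases hdvd : ∀ i < r, ℓ ∣ mu.hook i (lam.rowLen r)
  · exact hext.not_isJM_of_forall_dvd_hook (by omega) hdvd h
  · push Not at hdvd
    obtain ⟨x, hx, hnd⟩ := hdvd
    exact hext.not_isJM_of_not_dvd_hook hℓ hx hnd
end

section
/- Let ℓ > 2 be an integer, let λ and μ be partitions (Young diagrams) with λ ⊆ μ such that the set μ∖λ consists of exactly ℓ boxes, all lying in a single column (so μ is obtained from λ by adding a vertical ℓ-rim hook). If λ is not an (ℓ,0)-JM partition, then μ is not an (ℓ,0)-JM partition. -/
namespace YoungDiagram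

theorem colLen_mono {μ ν : YoungDiagram} (hle : μ ≤ ν) (j : ℕ) : μ.colLen j ≤ ν.colLen j :=
  le_of_forall_lt fun _ hi => mem_iff_lt_colLen.mp (hle (mem_iff_lt_colLen.mpr hi))

theorem hook_add_eq {μ : YoungDiagram} {a b : ℕ} (h : (a, b) ∈ μ) :
    μ.hook a b + (a + b + 1) = μ.rowLen a + μ.colLen b := by
  have := mem_iff_lt_rowLen.mp h
  have := mem_iff_lt_colLen.mp h
  unfold hook
  omega

theorem hook_add_eq_of_rowLen_eq_s2 {μ : YoungDiagram} {r r' j : ℕ} (h : (r, j) ∈ μ)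
    (h' : (r', j) ∈ μ) (hlen : μ.rowLen r = μ.rowLen r') : μ.hook r j + r = μ.hook r' j + r' := by
  have := hook_add_eq h
  have := hook_add_eq h'
  omega

def AddsVerticalHook (lam mu : YoungDiagram) (c ℓ : ℕ) : Prop :=
  ∀ r j, (r, j) ∈ mu ↔ (r, j) ∈ lam ∨ (j = c ∧ lam.colLen c ≤ r ∧ r < lam.colLen c + ℓ)

theorem addsVerticalHook_of_sdiff {lam mu : YoungDiagram} {c ℓ : ℕ} (hle : lam ≤ mu)
    (hcard : (mu.cells \ lam.cells).card = ℓ) (hcol : ∀ x ∈ mu.cells \ lam.cells, x.2 = c) :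
    lam.AddsVerticalHook mu c ℓ := by
  have hmem_sdiff : ∀ r j, (r, j) ∈ mu.cells \ lam.cells ↔
      j = c ∧ lam.colLen c ≤ r ∧ r < mu.colLen c := by
    refine fun r j => ⟨fun hx => ?_, ?_⟩
    · obtain rfl : j = c := hcol _ hx
      simp only [Finset.mem_sdiff, mem_cells, mem_iff_lt_colLen] at hx
      omega
    · rintro ⟨rfl, h1, h2⟩
      simp only [Finset.mem_sdiff, mem_cells, mem_iff_lt_colLen]
      omega
  have hsdiff : mu.cells \ lam.cells = (Finset.Ico (lam.colLen c) (mu.colLen c)).image (·, c) := by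
    ext ⟨r, j⟩
    simp only [hmem_sdiff, Finset.mem_image, Finset.mem_Ico, Prod.mk.injEq]
    constructor
    · rintro ⟨rfl, hr⟩
      exact ⟨r, hr, rfl, rfl⟩
    · rintro ⟨r, hr, rfl, rfl⟩
      exact ⟨rfl, hr⟩
  have hlen : mu.colLen c = lam.colLen c + ℓ := by
    rw [hsdiff, Finset.card_image_of_injective _ (Prod.mk_left_injective c), Nat.card_Ico] at hcard
    have := colLen_mono hle c
    omega
  intro r j
  rw [← hlen, ← hmem_sdiff, Finset.mem_sdiff, mem_cells, mem_cells]
  have := @hle (r, j)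
  tauto

namespace AddsVerticalHook

variable {lam mu : YoungDiagram} {c ℓ r j : ℕ} (h : lam.AddsVerticalHook mu c ℓ)
include h

theorem mem_of_mem (hr : (r, j) ∈ lam) : (r, j) ∈ mu := (h r j).2 (.inl hr)

theorem mem_col (hr₁ : lam.colLen c ≤ r) (hr₂ : r < lam.colLen c + ℓ) : (r, c) ∈ mu :=
  (h r c).2 (.inr ⟨rfl, hr₁, hr₂⟩)

theorem colLen_eq : mu.colLen c = lam.colLen c + ℓ :=
  eq_of_forall_lt_iff fun r => by
    rw [← mem_iff_lt_colLen, h, mem_iff_lt_colLen]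
    omega

theorem colLen_of_ne (hj : j ≠ c) : mu.colLen j = lam.colLen j :=
  eq_of_forall_lt_iff fun r => by
    rw [← mem_iff_lt_colLen, h, mem_iff_lt_colLen]
    simp [hj]

theorem rowLen_of_not_mem_rows (hr : ¬ (lam.colLen c ≤ r ∧ r < lam.colLen c + ℓ)) :
    mu.rowLen r = lam.rowLen r :=
  eq_of_forall_lt_iff fun j => by
    rw [← mem_iff_lt_rowLen, h, mem_iff_lt_rowLen]
    tauto

theorem rowLen_eq_of_mem_rows (hr₁ : lam.colLen c ≤ r) (hr₂ : r < lam.colLen c + ℓ) :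
    lam.rowLen r = c :=
  eq_of_forall_lt_iff fun j => by
    rw [← mem_iff_lt_rowLen]
    refine ⟨fun hj => ?_, fun hj => ?_⟩
    · by_contra! hcj
      have := mem_iff_lt_colLen.mp (lam.up_left_mem le_rfl hcj hj)
      omega
    · exact ((h r j).1 (mu.up_left_mem le_rfl hj.le (h.mem_col hr₁ hr₂))).resolve_right (by omega)

theorem rowLen_eq_succ_of_mem_rows (hr₁ : lam.colLen c ≤ r) (hr₂ : r < lam.colLen c + ℓ) :
    mu.rowLen r = c + 1 :=
  eq_of_forall_lt_iff fun j => by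
    rw [← mem_iff_lt_rowLen]
    refine ⟨fun hj => ?_, fun hj => mu.up_left_mem le_rfl (by omega) (h.mem_col hr₁ hr₂)⟩
    by_contra! hcj
    have hl := ((h r j).1 hj).resolve_right (by omega)
    have := mem_iff_lt_colLen.mp (lam.up_left_mem le_rfl (by omega : c ≤ j) hl)
    omega

theorem mem_iff_lt_of_mem_rows (hr₁ : lam.colLen c ≤ r) (hr₂ : r < lam.colLen c + ℓ) :
    (r, j) ∈ lam ↔ j < c := by
  rw [mem_iff_lt_rowLen, h.rowLen_eq_of_mem_rows hr₁ hr₂]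

theorem hook_eq_succ_of_mem_rows (hr₁ : lam.colLen c ≤ r) (hr₂ : r < lam.colLen c + ℓ)
    (hj : j < c) : mu.hook r j = lam.hook r j + 1 := by
  have hl := (h.mem_iff_lt_of_mem_rows hr₁ hr₂).2 hj
  have := hook_add_eq hl
  have := hook_add_eq (h.mem_of_mem hl)
  rw [h.rowLen_eq_of_mem_rows hr₁ hr₂] at *
  rw [h.rowLen_eq_succ_of_mem_rows hr₁ hr₂, h.colLen_of_ne hj.ne] at *
  omega

theorem hook_col_add (hr₁ : lam.colLen c ≤ r) (hr₂ : r < lam.colLen c + ℓ) :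
    mu.hook r c + r = lam.colLen c + ℓ := by
  have := hook_add_eq (h.mem_col hr₁ hr₂)
  rw [h.rowLen_eq_succ_of_mem_rows hr₁ hr₂, h.colLen_eq] at this
  omega

theorem dvd_hook_iff_of_not_mem_rows (hl : (r, j) ∈ lam)
    (hr : ¬ (lam.colLen c ≤ r ∧ r < lam.colLen c + ℓ)) : ℓ ∣ mu.hook r j ↔ ℓ ∣ lam.hook r j := by
  have := hook_add_eq hl
  have hmu := hook_add_eq (h.mem_of_mem hl)
  rw [h.rowLen_of_not_mem_rows hr] at hmu
  rcases eq_or_ne j c with rfl | hj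
  · rw [h.colLen_eq] at hmu
    rw [show mu.hook r j = lam.hook r j + ℓ by omega, Nat.dvd_add_self_right]
  · rw [h.colLen_of_ne hj] at hmu
    rw [show mu.hook r j = lam.hook r j by omega]

theorem hook_add_eq_of_mem_rows (hr₁ : lam.colLen c ≤ r) (hr₂ : r < lam.colLen c + ℓ)
    (hj : j < c) : lam.hook r j + r = lam.hook (lam.colLen c) j + lam.colLen c :=
  hook_add_eq_of_rowLen_eq_s2 ((h.mem_iff_lt_of_mem_rows hr₁ hr₂).2 hj)
    ((h.mem_iff_lt_of_mem_rows le_rfl (by omega)).2 hj)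
    ((h.rowLen_eq_of_mem_rows hr₁ hr₂).trans (h.rowLen_eq_of_mem_rows le_rfl (by omega)).symm)

theorem not_isJM_of_not_dvd_hook_add_one (hℓ : 2 ≤ ℓ) (hj : j < c)
    (hndvd : ¬ ℓ ∣ lam.hook (lam.colLen c) j + 1) : ¬ IsJM ℓ mu := by
  set s := lam.colLen c
  have htop := h.hook_col_add (r := s) le_rfl (by omega)
  have hnext := h.hook_col_add (r := s + 1) (by omega) (by omega)
  refine fun hJM => hJM ⟨s, c, j, s + 1, h.mem_col le_rfl (by omega),
    h.mem_of_mem ((h.mem_iff_lt_of_mem_rows le_rfl (by omega)).2 hj),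
    h.mem_col (by omega) (by omega), ?_, ?_, ?_⟩
  · rw [show mu.hook s c = ℓ by omega]
  · rwa [h.hook_eq_succ_of_mem_rows le_rfl (by omega) hj]
  · rw [show mu.hook (s + 1) c = ℓ - 1 by omega]
    exact Nat.not_dvd_of_pos_of_lt (by omega) (by omega)

section ForallDvdHookAddOne

variable (htop : ∀ j < c, ℓ ∣ lam.hook (lam.colLen c) j + 1)
include htop

theorem dvd_hook_iff_of_mem_rows {y : ℕ} (hr₁ : lam.colLen c ≤ r) (hr₂ : r < lam.colLen c + ℓ)
    (hj : j < c) (hy : y < c) : ℓ ∣ lam.hook r j ↔ ℓ ∣ lam.hook r y := by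
  have hmod : ∀ j < c, lam.hook r j + (r + 1) ≡ lam.colLen c [MOD ℓ] := fun j hj => by
    have hrow := h.hook_add_eq_of_mem_rows hr₁ hr₂ hj
    have := (Nat.modEq_zero_iff_dvd.2 (htop j hj)).add_right (lam.colLen c)
    rwa [zero_add, show lam.hook (lam.colLen c) j + 1 + lam.colLen c = lam.hook r j + (r + 1) by
      omega] at this
  exact (((hmod j hj).trans (hmod y hy).symm).add_right_cancel' _).dvd_iff dvd_rfl

theorem exists_not_dvd_hook_of_mem (hℓ : 2 ≤ ℓ) (hl : (r, j) ∈ lam) (hr : ¬ ℓ ∣ lam.hook r j) :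
    ∃ r', (r', j) ∈ mu ∧ ¬ ℓ ∣ mu.hook r' j := by
  by_cases hrows : lam.colLen c ≤ r ∧ r < lam.colLen c + ℓ
  · have hj := (h.mem_iff_lt_of_mem_rows hrows.1 hrows.2).1 hl
    refine ⟨lam.colLen c + 1,
      h.mem_of_mem ((h.mem_iff_lt_of_mem_rows (by omega) (by omega)).2 hj), ?_⟩
    have := h.hook_add_eq_of_mem_rows (r := lam.colLen c + 1) (by omega) (by omega) hj
    rw [h.hook_eq_succ_of_mem_rows (by omega) (by omega) hj,
      show lam.hook (lam.colLen c + 1) j + 1 = lam.hook (lam.colLen c) j by omega]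
    intro hdvd
    have := Nat.dvd_one.mp ((Nat.dvd_add_right hdvd).mp (htop j hj))
    omega
  · exact ⟨r, h.mem_of_mem hl, mt (h.dvd_hook_iff_of_not_mem_rows hl hrows).1 hr⟩

theorem not_isJM_of_forall_dvd_hook_add_one (hℓ : 2 ≤ ℓ) (hlam : ¬ IsJM ℓ lam) : ¬ IsJM ℓ mu := by
  rw [IsJM, not_not] at hlam
  obtain ⟨a, b, y, x, hab, hay, hxb, hdvd, hay_ndvd, hxb_ndvd⟩ := hlam
  have ha : ¬ (lam.colLen c ≤ a ∧ a < lam.colLen c + ℓ) := fun ha =>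
    hay_ndvd <| (h.dvd_hook_iff_of_mem_rows htop ha.1 ha.2
      ((h.mem_iff_lt_of_mem_rows ha.1 ha.2).1 hab) ((h.mem_iff_lt_of_mem_rows ha.1 ha.2).1 hay)).1
      hdvd
  obtain ⟨x', hx'b, hx'_ndvd⟩ := h.exists_not_dvd_hook_of_mem htop hℓ hxb hxb_ndvd
  exact fun hJM => hJM ⟨a, b, y, x', h.mem_of_mem hab, h.mem_of_mem hay, hx'b,
    (h.dvd_hook_iff_of_not_mem_rows hab ha).2 hdvd,
    mt (h.dvd_hook_iff_of_not_mem_rows hay ha).1 hay_ndvd, hx'_ndvd⟩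

end ForallDvdHookAddOne

end AddsVerticalHook

end YoungDiagram

/-- Adding a vertical `ℓ`-rim hook (ℓ boxes in a single column) to a partition that is not an
`(ℓ,0)`-JM partition yields a partition that is not an `(ℓ,0)`-JM partition. -/
theorem add_vertical_rim_hook_not_JM (ℓ : ℕ) (hℓ : 2 < ℓ) (lam mu : YoungDiagram)
    (hsub : lam.cells ⊆ mu.cells)
    (hcard : (mu.cells \ lam.cells).card = ℓ)
    (hcol : ∃ c : ℕ, ∀ x ∈ mu.cells \ lam.cells, x.2 = c)
    (h : ¬ IsJM ℓ lam) : ¬ IsJM ℓ mu := by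
  obtain ⟨c, hc⟩ := hcol
  have hadd :=
    YoungDiagram.addsVerticalHook_of_sdiff (YoungDiagram.cells_subset_iff.mp hsub) hcard hc
  by_cases htop : ∀ j < c, ℓ ∣ lam.hook (lam.colLen c) j + 1
  · exact hadd.not_isJM_of_forall_dvd_hook_add_one htop hℓ.le h
  · push Not at htop
    obtain ⟨j, hj, hndvd⟩ := htop
    exact hadd.not_isJM_of_not_dvd_hook_add_one hℓ.le hj hndvd
end

section
/- Let ℓ > 2 be an integer and let μ be a partition that has an ℓ-rim hook which is neither horizontal nor vertical. Then μ is not an (ℓ,0)-JM partition. -/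
/-- Two boxes are adjacent if they share an edge. -/
def CellAdj (u v : ℕ × ℕ) : Prop :=
  (u.1 = v.1 ∧ (u.2 + 1 = v.2 ∨ v.2 + 1 = u.2)) ∨
  (u.2 = v.2 ∧ (u.1 + 1 = v.1 ∨ v.1 + 1 = u.1))

/-- A set of boxes is connected if any two of its boxes are joined by a chain of boxes of the
set, successive boxes sharing an edge. -/
def ConnectedSet (R : Finset (ℕ × ℕ)) : Prop :=
  ∀ u ∈ R, ∀ v ∈ R,
    Relation.ReflTransGen (fun x y : ℕ × ℕ => x ∈ R ∧ y ∈ R ∧ CellAdj x y) u v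

/-- A set of boxes contains no 2×2 square. -/
def NoSquare (R : Finset (ℕ × ℕ)) : Prop :=
  ¬ ∃ i j : ℕ, (i, j) ∈ R ∧ (i + 1, j) ∈ R ∧ (i, j + 1) ∈ R ∧ (i + 1, j + 1) ∈ R

/-- `R` is an `ℓ`-rim hook of `μ`: a connected set of `ℓ` boxes of `μ` with no 2×2 square,
whose removal from `μ` leaves the Young diagram of a partition. -/
def IsRimHook (ℓ : ℕ) (μ : YoungDiagram) (R : Finset (ℕ × ℕ)) : Prop :=
  R ⊆ μ.cells ∧ R.card = ℓ ∧ (∃ ν : YoungDiagram, ν.cells = μ.cells \ R) ∧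
    ConnectedSet R ∧ NoSquare R

/-- A set of boxes all lying in one row. -/
def Horizontal (R : Finset (ℕ × ℕ)) : Prop := ∃ r : ℕ, ∀ c ∈ R, c.1 = r

/-- A set of boxes all lying in one column. -/
def Vertical (R : Finset (ℕ × ℕ)) : Prop := ∃ r : ℕ, ∀ c ∈ R, c.2 = r

/-- Two sets of boxes are adjacent if some box of one shares an edge with some box of the
other. -/
def AdjSets (R S : Finset (ℕ × ℕ)) : Prop := ∃ u ∈ R, ∃ v ∈ S, CellAdj u v

open Finset

theorem sum_Icc_sub_add_eq_of_succ_eq {f g : ℕ → ℕ} {a x : ℕ} (hax : a ≤ x)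
    (hle : ∀ r ∈ Icc a x, g r ≤ f r) (hstep : ∀ r ∈ Ico a x, f (r + 1) = g r + 1) :
    ∑ r ∈ Icc a x, (f r - g r) + g x = f a + (x - a) := by
  induction x, hax using Nat.le_induction with
  | base =>
    have := hle a (by simp)
    simp only [Icc_self, sum_singleton]
    omega
  | succ x hax ih =>
    have ih := ih (fun r hr => hle r (Icc_subset_Icc_right x.le_succ hr))
      (fun r hr => hstep r (Ico_subset_Ico_right x.le_succ hr))
    have hlast := hle (x + 1) (by simp; omega)
    have hx := hstep x (by simp; omega)
    rw [sum_Icc_succ_top (by omega)]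
    omega

theorem ConnectedSet.exists_vertical_crossing {R : Finset (ℕ × ℕ)} (hR : ConnectedSet R)
    {u v : ℕ × ℕ} (hu : u ∈ R) (hv : v ∈ R) {r : ℕ} (hur : u.1 ≤ r) (hrv : r < v.1) :
    ∃ c, (r, c) ∈ R ∧ (r + 1, c) ∈ R := by
  have crossing_of_chain : ∀ w,
      Relation.ReflTransGen (fun p q => p ∈ R ∧ q ∈ R ∧ CellAdj p q) u w → r < w.1 →
        ∃ c, (r, c) ∈ R ∧ (r + 1, c) ∈ R := by
    intro w hw
    induction hw with
    | refl => omega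
    | @tail p q _ hpq ih =>
      intro hrq
      by_cases hrp : r < p.1
      · exact ih hrp
      · obtain ⟨hp, hq, hadj⟩ := hpq
        obtain ⟨p₁, p₂⟩ := p
        obtain ⟨q₁, q₂⟩ := q
        simp only [CellAdj] at hadj hrp hrq
        obtain ⟨rfl, rfl, rfl⟩ : p₁ = r ∧ q₁ = r + 1 ∧ q₂ = p₂ := by omega
        exact ⟨_, hp, hq⟩
  exact crossing_of_chain v (hR u hu v hv) hrv

namespace YoungDiagram

variable {μ ν : YoungDiagram}

theorem rowLen_le_rowLen_s4 (h : ν ≤ μ) (r : ℕ) : ν.rowLen r ≤ μ.rowLen r := by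
  by_contra! hlt
  exact lt_irrefl _ (mem_iff_lt_rowLen.1 (h (mem_iff_lt_rowLen.2 hlt)))

theorem mk_mem_cells_sdiff_iff {r c : ℕ} :
    (r, c) ∈ μ.cells \ ν.cells ↔ ν.rowLen r ≤ c ∧ c < μ.rowLen r := by
  rw [mem_sdiff, mem_cells, mem_cells, mem_iff_lt_rowLen, mem_iff_lt_rowLen, not_lt, and_comm]

theorem card_cells_sdiff_eq_sum {a x : ℕ} (h : ∀ p ∈ μ.cells \ ν.cells, p.1 ∈ Icc a x) :
    (μ.cells \ ν.cells).card = ∑ r ∈ Icc a x, (μ.rowLen r - ν.rowLen r) := by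
  rw [card_eq_sum_card_fiberwise h]
  refine sum_congr rfl fun r _ => ?_
  have hrow : {p ∈ μ.cells \ ν.cells | p.1 = r} = {r} ×ˢ Ico (ν.rowLen r) (μ.rowLen r) := by
    ext ⟨r', c⟩
    simp only [mem_filter, mk_mem_cells_sdiff_iff, mem_product, mem_singleton, mem_Ico]
    constructor
    · rintro ⟨hc, rfl⟩
      exact ⟨rfl, hc⟩
    · rintro ⟨rfl, hc⟩
      exact ⟨hc, rfl⟩
  rw [hrow, card_product, card_singleton, one_mul, Nat.card_Ico]

theorem rowLen_succ_le_of_noSquare (h : NoSquare (μ.cells \ ν.cells)) (r : ℕ) :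
    μ.rowLen (r + 1) ≤ ν.rowLen r + 1 := by
  by_contra! hlt
  have hμ := μ.rowLen_anti r (r + 1) r.le_succ
  have hν := ν.rowLen_anti r (r + 1) r.le_succ
  exact h ⟨r, ν.rowLen r, by simp only [mk_mem_cells_sdiff_iff]; omega⟩

theorem rowLen_succ_eq_of_connected_of_noSquare (hconn : ConnectedSet (μ.cells \ ν.cells))
    (hsq : NoSquare (μ.cells \ ν.cells)) {u v : ℕ × ℕ} (hu : u ∈ μ.cells \ ν.cells)
    (hv : v ∈ μ.cells \ ν.cells) {r : ℕ} (hur : u.1 ≤ r) (hrv : r < v.1) :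
    μ.rowLen (r + 1) = ν.rowLen r + 1 := by
  obtain ⟨c, hc, hc'⟩ := hconn.exists_vertical_crossing hu hv hur hrv
  rw [mk_mem_cells_sdiff_iff] at hc hc'
  have := rowLen_succ_le_of_noSquare hsq r
  omega

theorem rowLen_le_of_forall_fst_le {x r : ℕ} (h : ∀ p ∈ μ.cells \ ν.cells, p.1 ≤ x)
    (hr : x < r) : μ.rowLen r ≤ ν.rowLen r := by
  by_contra! hlt
  have := h (r, ν.rowLen r) (mk_mem_cells_sdiff_iff.2 ⟨le_rfl, hlt⟩)
  omega

theorem colLen_le_of_forall_fst_le {x c : ℕ} (h : ∀ p ∈ μ.cells \ ν.cells, p.1 ≤ x)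
    (hc : ν.rowLen x ≤ c) : μ.colLen c ≤ x + 1 := by
  by_contra! hlt
  have hrow := mem_iff_lt_rowLen.1 (mem_iff_lt_colLen.2 hlt)
  have := rowLen_le_of_forall_fst_le h (Nat.lt_add_one x)
  have := ν.rowLen_anti x (x + 1) (Nat.le_add_right x 1)
  omega

theorem colLen_rowLen_eq {v : ℕ × ℕ} (hv : v ∈ μ.cells \ ν.cells)
    (h : ∀ p ∈ μ.cells \ ν.cells, p.1 ≤ v.1) : μ.colLen (ν.rowLen v.1) = v.1 + 1 := by
  obtain ⟨x, c⟩ := v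
  show μ.colLen (ν.rowLen x) = x + 1
  have hle : μ.colLen (ν.rowLen x) ≤ x + 1 := colLen_le_of_forall_fst_le h le_rfl
  rw [mk_mem_cells_sdiff_iff] at hv
  have hlt : x < μ.colLen (ν.rowLen x) :=
    mem_iff_lt_colLen.1 (mem_iff_lt_rowLen.2 (hv.1.trans_lt hv.2))
  omega

theorem rowLen_add_one_lt_of_not_vertical {a x : ℕ}
    (hrows : ∀ p ∈ μ.cells \ ν.cells, a ≤ p.1 ∧ p.1 ≤ x)
    (hnv : ¬ Vertical (μ.cells \ ν.cells)) : ν.rowLen x + 1 < μ.rowLen a := by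
  by_contra! hlt
  refine hnv ⟨ν.rowLen x, fun ⟨r, c⟩ hp => ?_⟩
  have hc := mk_mem_cells_sdiff_iff.1 hp
  have hνr : ν.rowLen x ≤ ν.rowLen r := ν.rowLen_anti _ _ (hrows _ hp).2
  have hμr : μ.rowLen r ≤ μ.rowLen a := μ.rowLen_anti _ _ (hrows _ hp).1
  change c = ν.rowLen x
  omega

theorem card_cells_sdiff_eq_hook (hle : ν ≤ μ) (hconn : ConnectedSet (μ.cells \ ν.cells))
    (hsq : NoSquare (μ.cells \ ν.cells)) {u v : ℕ × ℕ} (hu : u ∈ μ.cells \ ν.cells)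
    (hv : v ∈ μ.cells \ ν.cells)
    (hrows : ∀ p ∈ μ.cells \ ν.cells, u.1 ≤ p.1 ∧ p.1 ≤ v.1) :
    (μ.cells \ ν.cells).card = μ.hook u.1 (ν.rowLen v.1) := by
  have huv : u.1 ≤ v.1 := (hrows u hu).2
  have hsum := sum_Icc_sub_add_eq_of_succ_eq huv (fun r _ => rowLen_le_rowLen_s4 hle r)
    fun r hr => rowLen_succ_eq_of_connected_of_noSquare hconn hsq hu hv
      (mem_Ico.1 hr).1 (mem_Ico.1 hr).2
  have hcol := colLen_rowLen_eq hv fun p hp => (hrows p hp).2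
  have hνμ := (rowLen_le_rowLen_s4 hle v.1).trans (μ.rowLen_anti _ _ huv)
  rw [card_cells_sdiff_eq_sum fun p hp => mem_Icc.2 (hrows p hp), hook, hcol]
  omega

end YoungDiagram

open YoungDiagram in
theorem not_JM_of_nonHorizontal_nonVertical_rim_hook_general (ℓ : ℕ) (mu : YoungDiagram)
    (h : ∃ R : Finset (ℕ × ℕ), IsRimHook ℓ mu R ∧ ¬ Horizontal R ∧ ¬ Vertical R) :
    ¬ IsJM ℓ mu := by
  obtain ⟨R, ⟨hsub, rfl, ⟨ν, hν⟩, hconn, hsq⟩, hnh, hnv⟩ := h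
  obtain rfl : R = mu.cells \ ν.cells := by rw [hν, Finset.sdiff_sdiff_eq_self hsub]
  have hle : ν ≤ mu := cells_subset_iff.1 (hν ▸ sdiff_subset)
  have hne : (mu.cells \ ν.cells).Nonempty :=
    nonempty_iff_ne_empty.2 fun h0 => hnh ⟨0, by simp [h0]⟩
  obtain ⟨⟨a, c⟩, hu, htop⟩ := exists_min_image _ Prod.fst hne
  obtain ⟨⟨x, d⟩, hv, hbot⟩ := exists_max_image _ Prod.fst hne
  have hrows : ∀ p ∈ mu.cells \ ν.cells, a ≤ p.1 ∧ p.1 ≤ x :=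
    fun p hp => ⟨htop p hp, hbot p hp⟩
  have hcol : mu.colLen (ν.rowLen x) = x + 1 := colLen_rowLen_eq hv hbot
  have hcard : (mu.cells \ ν.cells).card = mu.hook a (ν.rowLen x) :=
    card_cells_sdiff_eq_hook hle hconn hsq hu hv hrows
  rw [hook, hcol] at hcard
  have hax : a < x := lt_of_not_ge fun hxa =>
    hnh ⟨a, fun p hp => le_antisymm ((hbot p hp).trans hxa) (htop p hp)⟩
  have hrow_a := rowLen_add_one_lt_of_not_vertical hrows hnv
  have hcol_y : mu.colLen (mu.rowLen a - 1) ≤ x + 1 :=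
    colLen_le_of_forall_fst_le hbot (by omega)
  have hrow_x : ν.rowLen x < mu.rowLen x := by
    obtain ⟨hνd, hdμ⟩ := mk_mem_cells_sdiff_iff.1 hv
    exact hνd.trans_lt hdμ
  have hrow_xa := mu.rowLen_anti a x hax.le
  intro hJM
  refine hJM ⟨a, ν.rowLen x, mu.rowLen a - 1, x, ?_, ?_, ?_, ?_,
    Nat.not_dvd_of_pos_of_lt ?_ ?_, Nat.not_dvd_of_pos_of_lt ?_ ?_⟩ <;>
  simp only [mem_iff_lt_rowLen, hook, hcol, ← hcard, dvd_refl] <;> omega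

/-- A partition having an `ℓ`-rim hook that is neither horizontal nor vertical is not an
`(ℓ,0)`-JM partition. -/
theorem not_JM_of_nonHorizontal_nonVertical_rim_hook (ℓ : ℕ) (hℓ : 2 < ℓ) (mu : YoungDiagram)
    (h : ∃ R : Finset (ℕ × ℕ), IsRimHook ℓ mu R ∧ ¬ Horizontal R ∧ ¬ Vertical R) :
    ¬ IsJM ℓ mu :=
  not_JM_of_nonHorizontal_nonVertical_rim_hook_general ℓ mu h
end

section
/- Let ℓ > 2 be an integer and let λ be an (ℓ,0)-JM partition. Then there do not exist a removable box of λ and two distinct addable boxes of λ all having the same residue modulo ℓ. -/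
/-- `c` is a removable box of `μ`. -/
def Removable (μ : YoungDiagram) (c : ℕ × ℕ) : Prop :=
  c ∈ μ ∧ ∃ ν : YoungDiagram, ν.cells = μ.cells \ {c}

/-- `c` is an addable box of `μ`. -/
def Addable (μ : YoungDiagram) (c : ℕ × ℕ) : Prop :=
  c ∉ μ ∧ ∃ ν : YoungDiagram, ν.cells = insert c μ.cells

/-- Two positions have the same residue modulo `ℓ`, i.e. `(col − row) mod ℓ` agree. -/
def SameRes (ℓ : ℕ) (u v : ℕ × ℕ) : Prop :=
  ((u.2 : ℤ) - u.1) ≡ ((v.2 : ℤ) - v.1) [ZMOD (ℓ : ℤ)]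

/-!
A removable box has hook length `1`, and an addable box `(c, d)` ends both row `c` and column `d`.
As the hook length of `(i, j)` is `rowLen i + colLen j - i - j - 1`, hook lengths modulo `ℓ` are
read off from the residues of these corners. Given addable `(c, d)`, `(c', d')` with `c < c'` and a
removable `(a, b)`, all of one residue, the box `(c, d')` has hook length `≡ -1`. If `c < a`, the
box `(c, b)` has hook length `≡ 0` while its row contains `(c, d')` and its column `(a, b)`; if
`a < c`, the box `(a, d')` has hook length `≡ 0` while its row contains `(a, b)` and its column
`(c, d')`. Either way the JM condition fails.
-/

namespace YoungDiagram

variable {μ : YoungDiagram}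

theorem hook_cast_eq {R : Type*} [CommRing R] {i j : ℕ} (h : (i, j) ∈ μ) :
    (μ.hook i j : R) = μ.rowLen i + μ.colLen j - (i + j + 1) := by
  have hrow := mem_iff_lt_rowLen.1 h
  have hcol := mem_iff_lt_colLen.1 h
  have hsum : μ.hook i j + (i + j + 1) = μ.rowLen i + μ.colLen j := by
    unfold hook; omega
  have hcast := congrArg (Nat.cast : ℕ → R) hsum
  push_cast at hcast
  linear_combination hcast

end YoungDiagram

open YoungDiagram

section Corners

variable {μ : YoungDiagram} {a b : ℕ}

theorem Removable.not_mem_of_le (h : Removable μ (a, b)) {i j : ℕ} (hi : a ≤ i) (hj : b ≤ j)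
    (hne : (i, j) ≠ (a, b)) : (i, j) ∉ μ := by
  obtain ⟨-, ν, hν⟩ := h
  intro hij
  have hij' : (i, j) ∈ ν := by
    rw [← mem_cells, hν, Finset.mem_sdiff, Finset.mem_singleton]
    exact ⟨hij, hne⟩
  have hab : (a, b) ∈ ν := ν.up_left_mem hi hj hij'
  rw [← mem_cells, hν] at hab
  simp at hab

theorem Removable.rowLen_eq (h : Removable μ (a, b)) : μ.rowLen a = b + 1 := by
  have hlt := mem_iff_lt_rowLen.1 h.1
  have hge := mt mem_iff_lt_rowLen.2 (h.not_mem_of_le le_rfl b.le_succ (by simp))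
  omega

theorem Removable.colLen_eq (h : Removable μ (a, b)) : μ.colLen b = a + 1 := by
  have hlt := mem_iff_lt_colLen.1 h.1
  have hge := mt mem_iff_lt_colLen.2 (h.not_mem_of_le a.le_succ le_rfl (by simp))
  omega

theorem Removable.hook_eq_one (h : Removable μ (a, b)) : μ.hook a b = 1 := by
  simp only [hook, h.rowLen_eq, h.colLen_eq]
  omega

theorem Addable.mem_of_le (h : Addable μ (a, b)) {i j : ℕ} (hi : i ≤ a) (hj : j ≤ b)
    (hne : (i, j) ≠ (a, b)) : (i, j) ∈ μ := by
  obtain ⟨-, ν, hν⟩ := h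
  have hab : (a, b) ∈ ν := by
    rw [← mem_cells, hν]
    exact Finset.mem_insert_self _ _
  have hij : (i, j) ∈ ν := ν.up_left_mem hi hj hab
  rw [← mem_cells, hν, Finset.mem_insert] at hij
  exact hij.resolve_left hne

theorem Addable.rowLen_eq (h : Addable μ (a, b)) : μ.rowLen a = b := by
  have hle := mt mem_iff_lt_rowLen.2 h.1
  by_contra hne
  have hmem := h.mem_of_le (j := μ.rowLen a) le_rfl (by omega) (by simp; omega)
  exact (mem_iff_lt_rowLen.1 hmem).false

theorem Addable.colLen_eq (h : Addable μ (a, b)) : μ.colLen b = a := by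
  have hle := mt mem_iff_lt_colLen.2 h.1
  by_contra hne
  have hmem := h.mem_of_le (i := μ.colLen b) (by omega) le_rfl (by simp; omega)
  exact (mem_iff_lt_colLen.1 hmem).false

theorem Addable.snd_lt_of_fst_lt {p q : ℕ × ℕ} (hp : Addable μ p) (hq : Addable μ q)
    (hpq : p.1 < q.1) : q.2 < p.2 := by
  have hle : q.2 ≤ p.2 := by
    rw [← hp.rowLen_eq, ← hq.rowLen_eq]
    exact μ.rowLen_anti _ _ hpq.le
  refine hle.lt_of_ne fun heq => hpq.ne ?_
  rw [← hp.colLen_eq, ← hq.colLen_eq, heq]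

theorem Addable.fst_ne {p q : ℕ × ℕ} (hp : Addable μ p) (hq : Addable μ q) (hpq : p ≠ q) :
    p.1 ≠ q.1 := fun heq => hpq (Prod.ext heq (by rw [← hp.rowLen_eq, ← hq.rowLen_eq, heq]))

end Corners

section Residues

variable {ℓ : ℕ} {μ : YoungDiagram}

theorem SameRes.cast_eq {u v : ℕ × ℕ} (h : SameRes ℓ u v) :
    (u.2 - u.1 : ZMod ℓ) = v.2 - v.1 := by
  have := (ZMod.intCast_eq_intCast_iff _ _ ℓ).2 h
  push_cast at this
  exact this

theorem Removable.not_sameRes_of_fst_eq (hℓ : ℓ ≠ 1) {x p : ℕ × ℕ} (hx : Removable μ x)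
    (hp : Addable μ p) (hrow : x.1 = p.1) : ¬ SameRes ℓ x p := by
  intro hxp
  obtain ⟨a, b⟩ := x
  obtain ⟨c, d⟩ := p
  obtain rfl : a = c := hrow
  have hd : (d : ZMod ℓ) = b + 1 := by
    rw [← hp.rowLen_eq, hx.rowLen_eq]
    push_cast
    rfl
  apply hℓ
  rw [← ZMod.one_eq_zero_iff]
  linear_combination -hd - hxp.cast_eq

theorem IsJM.not_sameRes_of_fst_lt (hℓ : ℓ ≠ 1) (hJM : IsJM ℓ μ) {x p q : ℕ × ℕ}
    (hx : Removable μ x) (hp : Addable μ p) (hq : Addable μ q) (hpq : p.1 < q.1)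
    (hxp : SameRes ℓ x p) : ¬ SameRes ℓ x q := by
  intro hxq
  have hxp' := hxp.cast_eq
  have hxq' := hxq.cast_eq
  have hxp_row : x.1 ≠ p.1 := fun h => hx.not_sameRes_of_fst_eq hℓ hp h hxp
  obtain ⟨a, b⟩ := x
  obtain ⟨c, d⟩ := p
  obtain ⟨c', d'⟩ := q
  have hdd' := hp.snd_lt_of_fst_lt hq hpq
  have hone : (1 : ZMod ℓ) ≠ 0 := mt ZMod.one_eq_zero_iff.1 hℓ
  have dvd_iff {n : ℕ} : ℓ ∣ n ↔ (n : ZMod ℓ) = 0 := (ZMod.natCast_eq_zero_iff n ℓ).symm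
  have hab : (a, b) ∈ μ := hx.1
  have hab_hook : ¬ ℓ ∣ μ.hook a b := by
    rw [hx.hook_eq_one, Nat.dvd_one]
    exact hℓ
  have hcd' : (c, d') ∈ μ := mem_iff_lt_rowLen.2 (hp.rowLen_eq ▸ hdd')
  have hcd'_hook : ¬ ℓ ∣ μ.hook c d' := by
    rw [dvd_iff, hook_cast_eq hcd', hp.rowLen_eq, hq.colLen_eq]
    intro h
    exact hone (by linear_combination hxq' - hxp' - h)
  rcases hxp_row.lt_or_gt with hac | hca
  · have hd'b : d' ≤ b := by
      by_contra hlt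
      exact hx.not_mem_of_le a.le_succ le_rfl (by simp) (μ.up_left_mem hac (by omega) hcd')
    have had' : (a, d') ∈ μ := μ.up_left_mem le_rfl hd'b hab
    refine hJM ⟨a, d', b, c, had', hab, hcd', ?_, hab_hook, hcd'_hook⟩
    rw [dvd_iff, hook_cast_eq had', hx.rowLen_eq, hq.colLen_eq]
    push_cast
    linear_combination hxq'
  · have hcb : (c, b) ∈ μ := μ.up_left_mem hca.le le_rfl hab
    refine hJM ⟨c, b, d', a, hcb, hcd', hab, ?_, hcd'_hook, hab_hook⟩
    rw [dvd_iff, hook_cast_eq hcb, hp.rowLen_eq, hx.colLen_eq]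
    push_cast
    linear_combination -hxp'

end Residues

/-- An `(ℓ,0)`-JM partition cannot have a removable box and two distinct addable boxes all of
the same residue. -/
theorem JM_no_removable_and_two_addable (ℓ : ℕ) (hℓ : 2 < ℓ) (lam : YoungDiagram)
    (h : IsJM ℓ lam) :
    ¬ ∃ x p q : ℕ × ℕ, Removable lam x ∧ Addable lam p ∧ Addable lam q ∧ p ≠ q ∧
        SameRes ℓ x p ∧ SameRes ℓ x q := by
  rintro ⟨x, p, q, hx, hp, hq, hpq, hxp, hxq⟩
  have hℓ' : ℓ ≠ 1 := by omega
  rcases (hp.fst_ne hq hpq).lt_or_gt with hlt | hgt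
  · exact h.not_sameRes_of_fst_lt hℓ' hx hp hq hlt hxp hxq
  · exact h.not_sameRes_of_fst_lt hℓ' hx hq hp hgt hxq hxp
end

section
/- Let ℓ > 2 be an integer, let λ be a partition, let (a,b) be a removable box of λ and (c,d) an addable box of λ lying on the same ladder as (a,b) with a < c (so that c − a = (ℓ−1)(b − d) and m := b − d > 0). Then the box (a,d) lies in λ and h_{(a,d)}^λ = mℓ. -/
/-! Since removing `(a, b)` and adding `(c, d)` both leave Young diagrams, row `a` has length
`b + 1` and column `d` has length `c`. Hence the hook of `(a, d)` is
`(b + 1 - d) + (c - a - 1) = (b - d) + (ℓ - 1)(b - d) = (b - d)ℓ` by the ladder equation. -/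

namespace Removable

variable {μ : YoungDiagram} {a b : ℕ}

theorem right_notMem (h : Removable μ (a, b)) : (a, b + 1) ∉ μ := by
  obtain ⟨-, ν, hν⟩ := h
  intro hright
  have hright_ν : (a, b + 1) ∈ ν := by
    rw [← YoungDiagram.mem_cells, hν]
    exact Finset.mem_sdiff.mpr ⟨hright, by simp⟩
  have hself_ν : (a, b) ∈ ν := ν.up_left_mem le_rfl (Nat.le_succ b) hright_ν
  rw [← YoungDiagram.mem_cells, hν] at hself_ν
  exact (Finset.mem_sdiff.mp hself_ν).2 (Finset.mem_singleton_self _)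

theorem rowLen_eq_s12 (h : Removable μ (a, b)) : μ.rowLen a = b + 1 := by
  have hlt := YoungDiagram.mem_iff_lt_rowLen.mp h.1
  have hle := mt YoungDiagram.mem_iff_lt_rowLen.mpr h.right_notMem
  omega

end Removable

namespace Addable

variable {μ : YoungDiagram} {c d : ℕ}

theorem up_mem (h : Addable μ (c + 1, d)) : (c, d) ∈ μ := by
  obtain ⟨-, ν, hν⟩ := h
  have hself_ν : (c + 1, d) ∈ ν := by
    rw [← YoungDiagram.mem_cells, hν]
    exact Finset.mem_insert_self _ _
  have hup_ν : (c, d) ∈ ν := ν.up_left_mem (Nat.le_succ c) le_rfl hself_ν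
  rw [← YoungDiagram.mem_cells, hν] at hup_ν
  rcases Finset.mem_insert.mp hup_ν with heq | hmem
  · simp at heq
  · exact hmem

theorem colLen_eq_s12 (h : Addable μ (c, d)) : μ.colLen d = c := by
  have hle := mt YoungDiagram.mem_iff_lt_colLen.mpr h.1
  cases c with
  | zero => omega
  | succ c =>
    have hlt := YoungDiagram.mem_iff_lt_colLen.mp h.up_mem
    omega

end Addable

theorem box_on_ladder_hook_general (ℓ : ℕ) (lam : YoungDiagram) (a b c d : ℕ)
    (hrem : Removable lam (a, b)) (hadd : Addable lam (c, d))
    (hladder : (c : ℤ) - a = ((ℓ : ℤ) - 1) * ((b : ℤ) - d))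
    (hac : a < c) (hdb : d < b) :
    (a, d) ∈ lam ∧ lam.hook a d = (b - d) * ℓ := by
  refine ⟨lam.up_left_mem le_rfl hdb.le hrem.1, ?_⟩
  rw [YoungDiagram.hook, hrem.rowLen_eq_s12, hadd.colLen_eq_s12]
  zify [hdb.le, Nat.succ_le_of_lt hac, show d ≤ b + 1 by omega]
  linear_combination hladder

/-- If `(a,b)` is a removable box of `λ` and `(c,d)` an addable box of `λ` on the same ladder
with `a < c` (so `c − a = (ℓ−1)(b − d)` and `m := b − d > 0`), then the box `(a,d)` lies in `λ`
and `h_{(a,d)}^λ = mℓ`. -/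
theorem box_on_ladder_hook (ℓ : ℕ) (hℓ : 2 < ℓ) (lam : YoungDiagram) (a b c d : ℕ)
    (hrem : Removable lam (a, b)) (hadd : Addable lam (c, d))
    (hladder : (c : ℤ) - a = ((ℓ : ℤ) - 1) * ((b : ℤ) - d))
    (hac : a < c) (hdb : d < b) :
    (a, d) ∈ lam ∧ lam.hook a d = (b - d) * ℓ :=
  box_on_ladder_hook_general ℓ lam a b c d hrem hadd hladder hac hdb
end
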